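/- arXiv:2402.17235 — 4 statements merged into one kernel-verified Lean document; each statement's English description precedes it below -/
import Mathlib

section
/- Non-uniform smoothness of the softmax value: for all θ ∈ ℝ^K, all r ∈ ℝ^K, and all y ∈ ℝ^K, the Hessian bilinear form of the smooth map θ ↦ π_θ^⊤r satisfies |y^⊤ H(θ) y| ≤ 3 · ‖∇(θ)‖₂ · ‖y‖₂², where H(θ) is the second derivative of θ ↦ π_θ^⊤r at θ. In particular, the spectral radius of the Hessian is at most 3·‖∇(θ)‖₂. -/
open MeasureTheory Finset Real

/-- Softmax policy. -/
noncomputable def softmax {K : ℕ} (θ : Fin K → ℝ) (a : Fin K) : ℝ :=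
  Real.exp (θ a) / ∑ a' : Fin K, Real.exp (θ a')

/-- Expected reward `π_θ^⊤ r`. -/
noncomputable def value {K : ℕ} (r θ : Fin K → ℝ) : ℝ :=
  ∑ a : Fin K, softmax θ a * r a

/-- True gradient of `θ ↦ π_θ^⊤ r`. -/
noncomputable def pgrad {K : ℕ} (r θ : Fin K → ℝ) (a : Fin K) : ℝ :=
  softmax θ a * (r a - value r θ)

/-- Euclidean norm on `ℝ^K`. -/
noncomputable def norm2 {K : ℕ} (v : Fin K → ℝ) : ℝ :=
  Real.sqrt (∑ a : Fin K, (v a) ^ 2)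

/-- Hessian of `θ ↦ π_θ^⊤ r`, with entries
`H(i,j) = δ_{ij}·π(j)·(r(i) − π^⊤r) − π(i)·π(j)·(r(i) − π^⊤r) − π(i)·π(j)·(r(j) − π^⊤r)`. -/
noncomputable def hess {K : ℕ} (r θ : Fin K → ℝ) (i j : Fin K) : ℝ :=
  (if i = j then softmax θ j * (r i - value r θ) else 0)
    - softmax θ i * softmax θ j * (r i - value r θ)
    - softmax θ i * softmax θ j * (r j - value r θ)

/-!
Writing `g = ∇(θ)` and `π = π_θ`, the Hessian quadratic form collapses to
`yᵀ H y = ∑ᵢ g(i) y(i)² − 2 (gᵀy)(πᵀy)`.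
The first term is at most `‖g‖₂ ‖y‖₂²` since `|g(i)| ≤ ‖g‖₂`, the factor `gᵀy` is at most
`‖g‖₂ ‖y‖₂` by Cauchy–Schwarz, and `πᵀy` is an average of the `y(i)`, hence at most `‖y‖₂`.
-/

lemma norm2_nonneg {K : ℕ} (v : Fin K → ℝ) : 0 ≤ norm2 v :=
  Real.sqrt_nonneg _

lemma sq_norm2 {K : ℕ} (v : Fin K → ℝ) : norm2 v ^ 2 = ∑ a, v a ^ 2 :=
  Real.sq_sqrt (sum_nonneg fun _ _ => sq_nonneg _)

lemma abs_le_norm2 {K : ℕ} (v : Fin K → ℝ) (a : Fin K) : |v a| ≤ norm2 v := by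
  rw [← Real.sqrt_sq_eq_abs]
  exact Real.sqrt_le_sqrt (single_le_sum (f := fun a => v a ^ 2) (fun _ _ => sq_nonneg _)
    (mem_univ a))

lemma abs_sum_mul_le_norm2_mul_norm2 {K : ℕ} (f g : Fin K → ℝ) :
    |∑ a, f a * g a| ≤ norm2 f * norm2 g := by
  rw [← Real.sqrt_sq_eq_abs, norm2, norm2, ← Real.sqrt_mul (sum_nonneg fun _ _ => sq_nonneg _)]
  exact Real.sqrt_le_sqrt (sum_mul_sq_le_sq_mul_sq univ f g)

lemma abs_sum_mul_sq_le_norm2_mul_sq_norm2 {K : ℕ} (g y : Fin K → ℝ) :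
    |∑ a, g a * y a ^ 2| ≤ norm2 g * norm2 y ^ 2 :=
  calc |∑ a, g a * y a ^ 2|
      ≤ ∑ a, |g a * y a ^ 2| := abs_sum_le_sum_abs _ _
    _ ≤ ∑ a, norm2 g * y a ^ 2 := by
        gcongr with a
        rw [abs_mul, abs_sq]
        gcongr
        exact abs_le_norm2 g a
    _ = norm2 g * norm2 y ^ 2 := by rw [← mul_sum, sq_norm2]

lemma softmax_nonneg {K : ℕ} (θ : Fin K → ℝ) (a : Fin K) : 0 ≤ softmax θ a := by
  unfold softmax
  positivity

lemma sum_softmax_le_one {K : ℕ} (θ : Fin K → ℝ) : ∑ a, softmax θ a ≤ 1 := by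
  simp only [softmax, ← sum_div]
  exact div_self_le_one _

lemma abs_sum_softmax_mul_le_norm2 {K : ℕ} (θ y : Fin K → ℝ) :
    |∑ a, softmax θ a * y a| ≤ norm2 y :=
  calc |∑ a, softmax θ a * y a|
      ≤ ∑ a, |softmax θ a * y a| := abs_sum_le_sum_abs _ _
    _ ≤ ∑ a, softmax θ a * norm2 y := by
        gcongr with a
        rw [abs_mul, abs_of_nonneg (softmax_nonneg θ a)]
        gcongr
        · exact softmax_nonneg θ a
        · exact abs_le_norm2 y a
    _ ≤ norm2 y := by
        rw [← sum_mul]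
        exact mul_le_of_le_one_left (norm2_nonneg y) (sum_softmax_le_one θ)

lemma sum_sum_mul_hess_mul {K : ℕ} (r θ y : Fin K → ℝ) :
    ∑ i, ∑ j, y i * hess r θ i j * y j =
      ∑ i, pgrad r θ i * y i ^ 2 - 2 * (∑ i, pgrad r θ i * y i) * ∑ i, softmax θ i * y i := by
  have hentry : ∀ i j, y i * hess r θ i j * y j =
      (if i = j then pgrad r θ i * y i ^ 2 else 0)
        - pgrad r θ i * y i * (softmax θ j * y j) - softmax θ i * y i * (pgrad r θ j * y j) := by
    intro i j
    unfold hess pgrad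
    split_ifs with h
    · subst h; ring
    · ring
  simp only [hentry, sum_sub_distrib, sum_ite_eq, mem_univ, if_true, ← mul_sum, ← sum_mul]
  ring

theorem nonuniform_smoothness_general
    (K : ℕ) (r θ y : Fin K → ℝ) :
    |∑ i : Fin K, ∑ j : Fin K, y i * hess r θ i j * y j|
      ≤ 3 * norm2 (pgrad r θ) * (norm2 y) ^ 2 := by
  rw [sum_sum_mul_hess_mul]
  have hA := abs_sum_mul_sq_le_norm2_mul_sq_norm2 (pgrad r θ) y
  have hB := abs_sum_mul_le_norm2_mul_norm2 (pgrad r θ) y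
  have hC := abs_sum_softmax_mul_le_norm2 θ y
  calc _ ≤ |∑ i, pgrad r θ i * y i ^ 2|
          + 2 * |∑ i, pgrad r θ i * y i| * |∑ i, softmax θ i * y i| := by
        simpa only [abs_mul, abs_two] using abs_sub (∑ i, pgrad r θ i * y i ^ 2)
          (2 * (∑ i, pgrad r θ i * y i) * ∑ i, softmax θ i * y i)
    _ ≤ norm2 (pgrad r θ) * norm2 y ^ 2 + 2 * (norm2 (pgrad r θ) * norm2 y) * norm2 y := by
        have hg := norm2_nonneg (pgrad r θ)
        have hy := norm2_nonneg y
        gcongr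
    _ = 3 * norm2 (pgrad r θ) * norm2 y ^ 2 := by ring

/-- Non-uniform smoothness: the Hessian bilinear form of `θ ↦ π_θ^⊤ r` satisfies
`|y^⊤ H(θ) y| ≤ 3 ‖∇(θ)‖₂ ‖y‖₂²`. -/
theorem nonuniform_smoothness
    (K : ℕ) (hK : 2 ≤ K) (r θ y : Fin K → ℝ) :
    |∑ i : Fin K, ∑ j : Fin K, y i * hess r θ i j * y j|
      ≤ 3 * norm2 (pgrad r θ) * (norm2 y) ^ 2 :=
  nonuniform_smoothness_general K r θ y
end

section
/- For every θ ∈ ℝ^K and r ∈ [−R_max, R_max]^K, the gradient norm dominates the reward variance up to a factor: ‖∇(θ)‖₂ ≥ (1 / (2·√K·R_max)) · Σ_{a=1}^K π_θ(a)·(r(a) − π_θ^⊤r)². -/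
open MeasureTheory Finset Real

/-! Each term of the variance is `|∇(θ)(a)| · |r(a) - π_θ^⊤r|`, and the second factor is at most
`2 R_max` because `π_θ^⊤r` is a convex combination of the rewards. Hence the variance is at most
`2 R_max ‖∇(θ)‖₁ ≤ 2 R_max √K ‖∇(θ)‖₂` by Cauchy–Schwarz. -/

section

variable {K : ℕ}

lemma softmax_pos (θ : Fin K → ℝ) (a : Fin K) : 0 < softmax θ a :=
  div_pos (exp_pos _) (sum_pos (fun _ _ => exp_pos _) ⟨a, mem_univ a⟩)

lemma sum_softmax [Nonempty (Fin K)] (θ : Fin K → ℝ) : ∑ a, softmax θ a = 1 := by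
  simp only [softmax, ← sum_div]
  exact div_self (sum_pos (fun _ _ => exp_pos _) univ_nonempty).ne'

lemma value_mem_of_convex [Nonempty (Fin K)] {s : Set ℝ} (hs : Convex ℝ s) {r : Fin K → ℝ}
    (hr : ∀ a, r a ∈ s) (θ : Fin K → ℝ) : value r θ ∈ s :=
  hs.sum_mem (fun a _ => (softmax_pos θ a).le) (sum_softmax θ) (fun a _ => hr a)

lemma abs_sub_value_le {R : ℝ} {r : Fin K → ℝ} (hr : ∀ a, r a ∈ Set.Icc (-R) R)
    (θ : Fin K → ℝ) (a : Fin K) : |r a - value r θ| ≤ 2 * R := by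
  have : Nonempty (Fin K) := ⟨a⟩
  obtain ⟨hv₁, hv₂⟩ := value_mem_of_convex (convex_Icc (-R) R) hr θ
  obtain ⟨hr₁, hr₂⟩ := hr a
  exact abs_sub_le_iff.2 ⟨by linarith, by linarith⟩

lemma softmax_mul_sq_sub_value (r θ : Fin K → ℝ) (a : Fin K) :
    softmax θ a * (r a - value r θ) ^ 2 = |pgrad r θ a| * |r a - value r θ| := by
  rw [pgrad, abs_mul, abs_of_pos (softmax_pos θ a), mul_assoc, abs_mul_abs_self, sq]

lemma sum_softmax_mul_sq_sub_value_le {R : ℝ} {r : Fin K → ℝ} (hr : ∀ a, r a ∈ Set.Icc (-R) R)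
    (θ : Fin K → ℝ) :
    ∑ a, softmax θ a * (r a - value r θ) ^ 2 ≤ 2 * R * ∑ a, |pgrad r θ a| := by
  rw [mul_sum]
  refine sum_le_sum fun a _ => ?_
  rw [softmax_mul_sq_sub_value, mul_comm (2 * R)]
  exact mul_le_mul_of_nonneg_left (abs_sub_value_le hr θ a) (abs_nonneg _)

lemma sum_abs_le_sqrt_card_mul_norm2 (v : Fin K → ℝ) : ∑ a, |v a| ≤ √K * norm2 v := by
  rw [norm2, ← sqrt_mul (Nat.cast_nonneg K)]
  apply le_sqrt_of_sq_le
  simpa using sq_sum_le_card_mul_sum_sq (s := univ) (f := fun a => |v a|)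

end

theorem grad_norm_dominates_reward_variance_general
    (K : ℕ) (Rmax : ℝ) (hRmax : 0 < Rmax)
    (r : Fin K → ℝ) (hr : ∀ a, r a ∈ Set.Icc (-Rmax) Rmax)
    (θ : Fin K → ℝ) :
    (1 / (2 * Real.sqrt K * Rmax)) * ∑ a : Fin K, softmax θ a * (r a - value r θ) ^ 2
      ≤ norm2 (pgrad r θ) := by
  rw [one_div]
  refine inv_mul_le_of_le_mul₀ (by positivity) (sqrt_nonneg _) ?_
  calc ∑ a, softmax θ a * (r a - value r θ) ^ 2
      ≤ 2 * Rmax * ∑ a, |pgrad r θ a| := sum_softmax_mul_sq_sub_value_le hr θ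
    _ ≤ 2 * Rmax * (√K * norm2 (pgrad r θ)) := by
      gcongr
      exact sum_abs_le_sqrt_card_mul_norm2 _
    _ = 2 * √K * Rmax * norm2 (pgrad r θ) := by ring

/-- The gradient norm dominates the reward variance up to a factor `1/(2√K·R_max)`. -/
theorem grad_norm_dominates_reward_variance
    (K : ℕ) (hK : 2 ≤ K) (Rmax : ℝ) (hRmax : 0 < Rmax)
    (r : Fin K → ℝ) (hr : ∀ a, r a ∈ Set.Icc (-Rmax) Rmax)
    (θ : Fin K → ℝ) :
    (1 / (2 * Real.sqrt K * Rmax)) * ∑ a : Fin K, softmax θ a * (r a - value r θ) ^ 2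
      ≤ norm2 (pgrad r θ) :=
  grad_norm_dominates_reward_variance_general K Rmax hRmax r hr θ
end

section
/- Time-uniform martingale concentration: let X_1, X_2, … be real random variables with |X_t| ≤ 1/2 almost surely for all t ≥ 1. Define S_n := |Σ_{t=1}^n (E[X_t | X_1,…,X_{t−1}] − X_t)| and V_n := Σ_{t=1}^n Var[X_t | X_1,…,X_{t−1}]. Then for every δ > 0, ℙ( ∃ n ≥ 1 : S_n ≥ 6·√((V_n + 4/3)·log((V_n + 1)/δ)) + 2·log(1/δ) + (4/3)·log 3 ) ≤ δ. -/
/-!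
For `|λ| ≤ 1`, the bound `exp x ≤ 1 + x + x²` on `[-1, 1]` makes
`exp (λ ∑_{t<n} Y_t - λ² ∑_{t<n} E[Y_t² | 𝒢_t])` a nonnegative supermartingale for every martingale
difference sequence with `|Y_t| ≤ 1`, so by Ville's maximal inequality it ever exceeds `3^{k+1}/δ`
with probability at most `δ/3^{k+1}`. Split the values of the variance process into epochs
`3^k ≤ V_n + 1 ≤ 3^{k+1}` and use in epoch `k` the rate `λ = ±min(1, √(L_k/3^k))`, where
`L_k = log(3^{k+1}/δ)`: on that epoch the boundary dominates `(L_k + λ² V_n)/λ`, so crossing it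
lifts one of the two supermartingales above `exp L_k`. A union bound over `k` and the sign costs
`∑_k 2δ/3^{k+1} = δ`. The theorem is the case `Y_t = E[X_t | X_{<t}] - X_t`, bounded by `1`
because `|X_t| ≤ 1/2`.
-/

open MeasureTheory Finset Real

section Freedman

variable {Ω : Type*} {m m0 : MeasurableSpace Ω} {μ : Measure Ω}

lemma integrable_exp_mul_of_abs_le_one [IsFiniteMeasure μ] {Y : Ω → ℝ}
    (hY : AEStronglyMeasurable Y μ) (hY_bdd : ∀ᵐ ω ∂μ, |Y ω| ≤ 1) (lam : ℝ) :
    Integrable (fun ω => exp (lam * Y ω)) μ := by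
  refine Integrable.of_bound (continuous_exp.comp_aestronglyMeasurable (hY.const_mul lam))
    (exp |lam|) ?_
  filter_upwards [hY_bdd] with ω hω
  rw [Real.norm_eq_abs, abs_exp, exp_le_exp]
  calc lam * Y ω ≤ |lam| * |Y ω| := abs_mul lam (Y ω) ▸ le_abs_self _
    _ ≤ |lam| := mul_le_of_le_one_right (abs_nonneg _) hω

lemma condExp_exp_mul_le [IsFiniteMeasure μ] (hm : m ≤ m0) {Y : Ω → ℝ}
    (hY : AEStronglyMeasurable Y μ)
    (hY_bdd : ∀ᵐ ω ∂μ, |Y ω| ≤ 1) (hY_cond : μ[Y | m] =ᵐ[μ] 0) {lam : ℝ} (hlam : |lam| ≤ 1) :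
    μ[fun ω => exp (lam * Y ω) | m]
      ≤ᵐ[μ] fun ω => exp (lam ^ 2 * μ[fun ω => Y ω ^ 2 | m] ω) := by
  have hY_int : Integrable Y μ :=
    Integrable.of_bound hY 1 (by simpa only [Real.norm_eq_abs] using hY_bdd)
  have hY2_int : Integrable (fun ω => Y ω ^ 2) μ := by
    refine Integrable.of_bound (hY.pow 2) 1 ?_
    filter_upwards [hY_bdd] with ω hω
    rw [Real.norm_eq_abs, abs_pow]
    exact pow_le_one₀ (abs_nonneg _) hω
  have hexp_int := integrable_exp_mul_of_abs_le_one hY hY_bdd lam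
  -- `exp x ≤ 1 + x + x ^ 2` for `|x| ≤ 1`, and the quadratic has conditional mean `1 + λ² σ²`.
  have hexp_le : (fun ω => exp (lam * Y ω))
      ≤ᵐ[μ] (fun _ => 1) + lam • Y + lam ^ 2 • fun ω => Y ω ^ 2 := by
    filter_upwards [hY_bdd] with ω hω
    have hx : |lam * Y ω| ≤ 1 := by
      rw [abs_mul]; exact mul_le_one₀ hlam (abs_nonneg _) hω
    have := (abs_le.1 (abs_exp_sub_one_sub_id_le hx)).2
    simp only [Pi.add_apply, Pi.smul_apply, smul_eq_mul]
    linarith [show (lam * Y ω) ^ 2 = lam ^ 2 * Y ω ^ 2 by ring]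
  have hquad_cond : μ[(fun _ => 1) + lam • Y + lam ^ 2 • fun ω => Y ω ^ 2 | m]
      =ᵐ[μ] fun ω => 1 + lam ^ 2 * μ[fun ω => Y ω ^ 2 | m] ω := by
    filter_upwards [condExp_add ((integrable_const 1).add (hY_int.smul lam))
        (hY2_int.smul (lam ^ 2)) m,
      condExp_add (integrable_const 1) (hY_int.smul lam) m, condExp_smul lam Y m,
      condExp_smul (lam ^ 2) (fun ω => Y ω ^ 2) m, hY_cond] with ω h1 h2 h3 h4 h5
    rw [h1, Pi.add_apply, h2, Pi.add_apply, h3, h4, condExp_const hm]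
    simp [h5]
  filter_upwards [condExp_mono hexp_int (((integrable_const 1).add (hY_int.smul lam)).add
    (hY2_int.smul (lam ^ 2))) hexp_le, hquad_cond] with ω h1 h2
  linarith [add_one_le_exp (lam ^ 2 * μ[fun ω => Y ω ^ 2 | m] ω)]

structure IsMartingaleDiffBoundedByOne (μ : Measure Ω) (𝒢 : Filtration ℕ m0) (Y : ℕ → Ω → ℝ) :
    Prop where
  stronglyMeasurable_succ (t : ℕ) : StronglyMeasurable[𝒢 (t + 1)] (Y t)
  abs_le_one (t : ℕ) : ∀ᵐ ω ∂μ, |Y t ω| ≤ 1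
  condExp_eq_zero (t : ℕ) : μ[Y t | 𝒢 t] =ᵐ[μ] 0

noncomputable def freedmanProcess (μ : Measure Ω) (𝒢 : Filtration ℕ m0) (Y : ℕ → Ω → ℝ)
    (lam : ℝ) (n : ℕ) (ω : Ω) : ℝ :=
  exp (lam * ∑ t ∈ range n, Y t ω - lam ^ 2 * ∑ t ∈ range n, μ[fun ω => Y t ω ^ 2 | 𝒢 t] ω)

variable {𝒢 : Filtration ℕ m0} {Y : ℕ → Ω → ℝ} {lam : ℝ}

lemma freedmanProcess_pos (n : ℕ) (ω : Ω) : 0 < freedmanProcess μ 𝒢 Y lam n ω := exp_pos _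

@[simp]
lemma freedmanProcess_zero : freedmanProcess μ 𝒢 Y lam 0 = 1 := by
  ext ω; simp [freedmanProcess]

lemma freedmanProcess_succ (n : ℕ) (ω : Ω) :
    freedmanProcess μ 𝒢 Y lam (n + 1) ω = freedmanProcess μ 𝒢 Y lam n ω
      * exp (-(lam ^ 2 * μ[fun ω => Y n ω ^ 2 | 𝒢 n] ω)) * exp (lam * Y n ω) := by
  simp only [freedmanProcess, ← exp_add, sum_range_succ]
  ring_nf

lemma stronglyMeasurable_freedmanProcess (hY : ∀ t, StronglyMeasurable[𝒢 (t + 1)] (Y t))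
    (n : ℕ) : StronglyMeasurable[𝒢 n] (freedmanProcess μ 𝒢 Y lam n) := by
  refine continuous_exp.comp_stronglyMeasurable (StronglyMeasurable.sub ?_ ?_)
  · refine (stronglyMeasurable_fun_sum _ fun t ht => ?_).const_mul lam
    exact (hY t).mono (𝒢.mono (mem_range.1 ht))
  · refine (stronglyMeasurable_fun_sum _ fun t ht => ?_).const_mul (lam ^ 2)
    exact stronglyMeasurable_condExp.mono (𝒢.mono (mem_range.1 ht).le)

lemma freedmanProcess_le_exp (hY_bdd : ∀ t, ∀ᵐ ω ∂μ, |Y t ω| ≤ 1) (hlam : |lam| ≤ 1) (n : ℕ) :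
    ∀ᵐ ω ∂μ, freedmanProcess μ 𝒢 Y lam n ω ≤ exp n := by
  have hσ_nonneg (t : ℕ) : 0 ≤ᵐ[μ] μ[fun ω => Y t ω ^ 2 | 𝒢 t] :=
    condExp_nonneg (ae_of_all _ fun ω => sq_nonneg _)
  filter_upwards [ae_all_iff.2 hY_bdd, ae_all_iff.2 hσ_nonneg] with ω hY hσ
  rw [freedmanProcess, exp_le_exp]
  have hsum : lam * ∑ t ∈ range n, Y t ω ≤ n := by
    calc lam * ∑ t ∈ range n, Y t ω ≤ |lam * ∑ t ∈ range n, Y t ω| := le_abs_self _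
      _ ≤ 1 * ∑ t ∈ range n, 1 := by
        rw [abs_mul]
        exact mul_le_mul hlam ((abs_sum_le_sum_abs _ _).trans (sum_le_sum fun t _ => hY t))
          (abs_nonneg _) zero_le_one
      _ = n := by simp
  have := sum_nonneg fun t (_ : t ∈ range n) => hσ t
  nlinarith [sq_nonneg lam]

lemma supermartingale_freedmanProcess [IsFiniteMeasure μ]
    (hY : IsMartingaleDiffBoundedByOne μ 𝒢 Y) (hlam : |lam| ≤ 1) :
    Supermartingale (freedmanProcess μ 𝒢 Y lam) 𝒢 μ := by
  have hadapted := stronglyMeasurable_freedmanProcess (μ := μ) (lam := lam)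
    hY.stronglyMeasurable_succ
  have hint (n : ℕ) : Integrable (freedmanProcess μ 𝒢 Y lam n) μ := by
    refine Integrable.of_bound ((hadapted n).mono (𝒢.le n)).aestronglyMeasurable (exp n) ?_
    filter_upwards [freedmanProcess_le_exp (𝒢 := 𝒢) hY.abs_le_one hlam n] with ω hω
    rwa [Real.norm_of_nonneg (freedmanProcess_pos n ω).le]
  refine supermartingale_nat hadapted hint fun n => ?_
  set σ := μ[fun ω => Y n ω ^ 2 | 𝒢 n]
  set A : Ω → ℝ := fun ω => freedmanProcess μ 𝒢 Y lam n ω * exp (-(lam ^ 2 * σ ω))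
  have hA : StronglyMeasurable[𝒢 n] A :=
    (hadapted n).mul (continuous_exp.comp_stronglyMeasurable
      (stronglyMeasurable_condExp.const_mul _).neg)
  have hsplit : freedmanProcess μ 𝒢 Y lam (n + 1) = A * fun ω => exp (lam * Y n ω) :=
    funext (freedmanProcess_succ n)
  have hYn := (hY.stronglyMeasurable_succ n).mono (𝒢.le _)
  rw [hsplit]
  filter_upwards [condExp_mul_of_stronglyMeasurable_left hA (hsplit ▸ hint (n + 1))
      (integrable_exp_mul_of_abs_le_one hYn.aestronglyMeasurable (hY.abs_le_one n) lam),
    condExp_exp_mul_le (𝒢.le n) hYn.aestronglyMeasurable (hY.abs_le_one n)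
      (hY.condExp_eq_zero n) hlam] with ω hmul hexp
  rw [hmul, Pi.mul_apply]
  calc A ω * μ[fun ω => exp (lam * Y n ω) | 𝒢 n] ω ≤ A ω * exp (lam ^ 2 * σ ω) :=
        mul_le_mul_of_nonneg_left hexp (mul_pos (freedmanProcess_pos n ω) (exp_pos _)).le
    _ = freedmanProcess μ 𝒢 Y lam n ω := by
        rw [mul_assoc, ← exp_add, neg_add_cancel, exp_zero, mul_one]

end Freedman

section Ville

variable {Ω : Type*} {m0 : MeasurableSpace Ω} {μ : Measure Ω} [IsFiniteMeasure μ]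
  {𝒢 : Filtration ℕ m0} {M : ℕ → Ω → ℝ}

lemma Supermartingale.mul_measureReal_exists_ge_le (hM : Supermartingale M 𝒢 μ)
    (hM_nonneg : ∀ n ω, 0 ≤ M n ω) (c : ℝ) (N : ℕ) :
    c * μ.real {ω | ∃ k ≤ N, c ≤ M k ω} ≤ ∫ ω, M 0 ω ∂μ := by
  set τ : Ω → ℕ∞ := fun ω => (hittingBtwn M (Set.Ici c) 0 N ω : ℕ)
  have hτ : IsStoppingTime 𝒢 τ :=
    hM.stronglyAdapted.adapted.isStoppingTime_hittingBtwn measurableSet_Ici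
  have hτ_le (ω : Ω) : τ ω ≤ N := WithTop.coe_le_coe.2 (hittingBtwn_le ω)
  have hint : Integrable (stoppedValue M τ) μ :=
    integrable_neg_iff.1 (hM.neg.integrable_stoppedValue hτ hτ_le)
  have hmeas : MeasurableSet {ω | ∃ k ≤ N, c ≤ M k ω} := by
    simp only [Set.ofPred_exists, Set.ofPred_and]
    exact .iUnion fun k => (MeasurableSet.const _).inter <| measurableSet_le measurable_const
      ((hM.stronglyAdapted k).measurable.mono (𝒢.le k) le_rfl)
  calc c * μ.real {ω | ∃ k ≤ N, c ≤ M k ω}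
      ≤ ∫ ω in {ω | ∃ k ≤ N, c ≤ M k ω}, stoppedValue M τ ω ∂μ :=
        setIntegral_ge_of_const_le_real hmeas (measure_ne_top _ _)
          (fun _ ⟨k, hk, hck⟩ => stoppedValue_hittingBtwn_mem ⟨k, ⟨Nat.zero_le k, hk⟩, hck⟩)
          hint.integrableOn
    _ ≤ ∫ ω, stoppedValue M τ ω ∂μ :=
        setIntegral_le_integral hint (ae_of_all _ fun ω => hM_nonneg _ _)
    _ ≤ ∫ ω, M 0 ω ∂μ := by
        have := hM.neg.expected_stoppedValue_mono (isStoppingTime_const 𝒢 0) hτ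
          (fun ω => zero_le) hτ_le
        simpa [stoppedValue, integral_neg] using this

lemma Supermartingale.measure_exists_ge_le (hM : Supermartingale M 𝒢 μ)
    (hM_nonneg : ∀ n ω, 0 ≤ M n ω) {c : ℝ} (hc : 0 < c) :
    μ {ω | ∃ n, c ≤ M n ω} ≤ ENNReal.ofReal ((∫ ω, M 0 ω ∂μ) / c) := by
  have hunion : {ω | ∃ n, c ≤ M n ω} = ⋃ N, {ω | ∃ k ≤ N, c ≤ M k ω} := by
    ext ω
    simp only [Set.mem_ofPred_eq, Set.mem_iUnion]
    exact ⟨fun ⟨n, hn⟩ => ⟨n, n, le_rfl, hn⟩, fun ⟨_, k, _, hk⟩ => ⟨k, hk⟩⟩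
  have hmono : Monotone fun N => {ω | ∃ k ≤ N, c ≤ M k ω} :=
    fun N N' hN ω ⟨k, hk, hck⟩ => ⟨k, hk.trans hN, hck⟩
  rw [hunion, hmono.measure_iUnion]
  refine iSup_le fun N => ?_
  rw [← ofReal_measureReal]
  exact ENNReal.ofReal_le_ofReal
    ((le_div_iff₀' hc).2 (Supermartingale.mul_measureReal_exists_ge_le hM hM_nonneg c N))

end Ville

lemma measure_exists_freedmanProcess_ge_le {Ω : Type*} {m0 : MeasurableSpace Ω}
    {μ : Measure Ω} [IsProbabilityMeasure μ] {𝒢 : Filtration ℕ m0} {Y : ℕ → Ω → ℝ}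
    (hY : IsMartingaleDiffBoundedByOne μ 𝒢 Y) {lam : ℝ} (hlam : |lam| ≤ 1) {c : ℝ}
    (hc : 0 < c) :
    μ {ω | ∃ n, c ≤ freedmanProcess μ 𝒢 Y lam n ω} ≤ ENNReal.ofReal c⁻¹ := by
  simpa using Supermartingale.measure_exists_ge_le (supermartingale_freedmanProcess hY hlam)
    (fun n ω => (freedmanProcess_pos n ω).le) hc

section Stitching

noncomputable def stitchedBoundary (δ v : ℝ) : ℝ :=
  6 * Real.sqrt ((v + 4 / 3) * Real.log ((v + 1) / δ)) + 2 * Real.log (1 / δ)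
    + (4 / 3) * Real.log 3

noncomputable def epochLevel (δ : ℝ) (k : ℕ) : ℝ := log (1 / δ) + (k + 1) * log 3

-- The minimiser of `λ ↦ (epochLevel δ k + λ² 3ᵏ) / λ`, capped at `1`.
noncomputable def epochRate (δ : ℝ) (k : ℕ) : ℝ :=
  min 1 (Real.sqrt (epochLevel δ k / 3 ^ k))

variable {δ v : ℝ} {k : ℕ}

lemma exp_epochLevel (hδ : 0 < δ) (k : ℕ) : exp (epochLevel δ k) = 3 ^ (k + 1) / δ := by
  rw [epochLevel, exp_add, exp_log (by positivity), ← Nat.cast_add_one, ← log_pow,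
    exp_log (by positivity)]
  ring

lemma log_one_div_nonneg (hδ : 0 < δ) (hδ1 : δ ≤ 1) : 0 ≤ log (1 / δ) :=
  log_nonneg ((one_le_div hδ).2 hδ1)

lemma one_le_epochLevel (hδ : 0 < δ) (hδ1 : δ ≤ 1) (k : ℕ) : 1 ≤ epochLevel δ k := by
  have := log_one_div_nonneg hδ hδ1
  have := log_three_gt_d9
  rw [epochLevel]
  nlinarith [(Nat.cast_nonneg k : (0 : ℝ) ≤ k)]

lemma epochRate_pos (hδ : 0 < δ) (hδ1 : δ ≤ 1) (k : ℕ) : 0 < epochRate δ k :=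
  lt_min one_pos (Real.sqrt_pos.2 (div_pos (one_pos.trans_le (one_le_epochLevel hδ hδ1 k))
    (by positivity)))

lemma abs_epochRate_le_one (hδ : 0 < δ) (hδ1 : δ ≤ 1) (k : ℕ) :
    |epochRate δ k| ≤ 1 := by
  rw [abs_of_pos (epochRate_pos hδ hδ1 k)]
  exact min_le_left _ _

lemma log_div_eq_log_add_log_one_div (hδ : 0 < δ) (hv : 0 < v + 1) :
    log ((v + 1) / δ) = log (v + 1) + log (1 / δ) := by
  rw [div_eq_mul_one_div (v + 1), log_mul hv.ne' (by positivity)]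

lemma epochLevel_zero_add_le_stitchedBoundary (hδ : 0 < δ) (hδ1 : δ ≤ 1) (hv : 0 ≤ v)
    (hv3 : v + 1 ≤ 3) : epochLevel δ 0 + v ≤ stitchedBoundary δ v := by
  have hlog : v / 3 ≤ log (v + 1) :=
    calc v / 3 ≤ v / (v + 1) := div_le_div_of_nonneg_left hv (by linarith) hv3
      _ = 1 - (v + 1)⁻¹ := by field_simp; ring
      _ ≤ log (v + 1) := one_sub_inv_le_log_of_pos (by linarith)
  have hD := log_one_div_nonneg hδ hδ1
  have hℓ : v / 3 ≤ log ((v + 1) / δ) := by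
    rw [log_div_eq_log_add_log_one_div hδ (by linarith)]; linarith
  have hsqrt : v / 6 ≤ Real.sqrt ((v + 4 / 3) * log ((v + 1) / δ)) :=
    Real.le_sqrt_of_sq_le (by nlinarith)
  have := log_three_gt_d9
  rw [epochLevel, stitchedBoundary]
  push_cast
  linarith

lemma epochLevel_add_le_stitchedBoundary_of_pow_le (hδ : 0 < δ) (hk : 1 ≤ k)
    (hL : 3 ^ k ≤ epochLevel δ k) (hv : 3 ^ k ≤ v + 1) (hv3 : v + 1 ≤ 3 ^ (k + 1)) :
    epochLevel δ k + v ≤ stitchedBoundary δ v := by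
  set P : ℝ := 3 ^ k
  have hP : 3 ≤ P := le_self_pow₀ (by norm_num) (by omega)
  have hbernoulli : 1 + 2 * (k : ℝ) ≤ P := by
    have := one_add_mul_le_pow (by norm_num : (-2 : ℝ) ≤ 2) k
    norm_num at this
    linarith
  have hlog3 := log_three_lt_d9
  have hklog3 : (k : ℝ) * log 3 ≤ k * 1.1 := by gcongr; linarith
  have hlogv : (k : ℝ) * log 3 ≤ log (v + 1) := by
    rw [← log_pow]; exact log_le_log (by positivity) hv
  have hℓ : (3 / 5) * P ≤ log ((v + 1) / δ) := by
    rw [log_div_eq_log_add_log_one_div hδ (by linarith)]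
    rw [epochLevel] at hL
    linarith
  have hsqrt : (23 / 30) * P ≤ Real.sqrt ((v + 4 / 3) * log ((v + 1) / δ)) :=
    Real.le_sqrt_of_sq_le (by nlinarith)
  rw [pow_succ] at hv3
  rw [epochLevel] at hL ⊢
  rw [stitchedBoundary]
  linarith

lemma epochLevel_add_div_mul_le_of_lt_pow (hδ : 0 < δ) (hδ1 : δ ≤ 1) (hL : epochLevel δ k < 3 ^ k)
    (hv : 3 ^ k ≤ v + 1) (hv3 : v + 1 ≤ 3 ^ (k + 1)) :
    epochLevel δ k + epochLevel δ k / 3 ^ k * v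
      ≤ Real.sqrt (epochLevel δ k / 3 ^ k) * stitchedBoundary δ v := by
  set L := epochLevel δ k
  set P : ℝ := 3 ^ k
  have hL1 := one_le_epochLevel hδ hδ1 k
  have hk : 1 ≤ k := by
    by_contra! hk
    simp [Nat.lt_one_iff.1 hk, P] at hL
    linarith
  have hP : 0 < P := by positivity
  have hD := log_one_div_nonneg hδ hδ1
  have hlog3 := log_three_gt_d9
  have hlogv : (k : ℝ) * log 3 ≤ log (v + 1) := by
    rw [← log_pow]; exact log_le_log (by positivity) hv
  have hℓ : L ≤ 2 * log ((v + 1) / δ) := by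
    rw [log_div_eq_log_add_log_one_div hδ (hP.trans_le hv)]
    have : (1 : ℝ) ≤ k := by exact_mod_cast hk
    simp only [L, epochLevel]
    nlinarith
  have hvar : L + L / P * v ≤ 4 * L := by
    rw [pow_succ] at hv3
    have : L / P * v ≤ 3 * L := by
      rw [div_mul_eq_mul_div, div_le_iff₀ hP]; nlinarith
    linarith
  have hsqrt : (2 / 3) * L ≤ Real.sqrt (L / P) * Real.sqrt ((v + 4 / 3) * log ((v + 1) / δ)) := by
    rw [← Real.sqrt_mul (by positivity)]
    refine Real.le_sqrt_of_sq_le ?_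
    have : L ≤ L / P * (v + 4 / 3) := by
      rw [div_mul_eq_mul_div, le_div_iff₀ hP]; nlinarith
    nlinarith
  have hrest : 0 ≤ 2 * log (1 / δ) + (4 / 3) * log 3 := by positivity
  calc L + L / P * v ≤ 4 * L := hvar
    _ ≤ Real.sqrt (L / P) * (6 * Real.sqrt ((v + 4 / 3) * log ((v + 1) / δ))) := by nlinarith
    _ ≤ Real.sqrt (L / P) * stitchedBoundary δ v := by
      rw [stitchedBoundary]
      nlinarith [Real.sqrt_nonneg (L / P)]
lemma epochLevel_add_epochRate_sq_mul_le (hδ : 0 < δ) (hδ1 : δ ≤ 1) (hv0 : 0 ≤ v)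
    (hv : 3 ^ k ≤ v + 1) (hv3 : v + 1 ≤ 3 ^ (k + 1)) :
    epochLevel δ k + epochRate δ k ^ 2 * v ≤ epochRate δ k * stitchedBoundary δ v := by
  rcases le_or_gt (3 ^ k) (epochLevel δ k) with hL | hL
  · have hrate : epochRate δ k = 1 :=
      min_eq_left (Real.one_le_sqrt.2 ((one_le_div (by positivity)).2 hL))
    rw [hrate, one_pow, one_mul, one_mul]
    rcases Nat.eq_zero_or_pos k with rfl | hk
    · exact epochLevel_zero_add_le_stitchedBoundary hδ hδ1 hv0 (by simpa using hv3)
    · exact epochLevel_add_le_stitchedBoundary_of_pow_le hδ hk hL hv hv3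
  · have hrate : epochRate δ k = Real.sqrt (epochLevel δ k / 3 ^ k) :=
      min_eq_right (Real.sqrt_le_one.2 ((div_le_one (by positivity)).2 hL.le))
    rw [hrate, Real.sq_sqrt (div_nonneg (zero_le_one.trans (one_le_epochLevel hδ hδ1 k))
      (by positivity))]
    exact epochLevel_add_div_mul_le_of_lt_pow hδ hδ1 hL hv hv3

lemma exists_epochLevel_le_of_stitchedBoundary_le (hδ : 0 < δ) (hδ1 : δ ≤ 1) (hv : 0 ≤ v)
    {y : ℝ} (hy : stitchedBoundary δ v ≤ |y|) :
    ∃ k, epochLevel δ k ≤ epochRate δ k * y - epochRate δ k ^ 2 * v ∨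
      epochLevel δ k ≤ -epochRate δ k * y - (-epochRate δ k) ^ 2 * v := by
  obtain ⟨k, hk, hk3⟩ :=
    exists_nat_pow_near (by linarith : (1 : ℝ) ≤ v + 1) (by norm_num : (1 : ℝ) < 3)
  refine ⟨k, ?_⟩
  have hkey := epochLevel_add_epochRate_sq_mul_le hδ hδ1 hv hk hk3.le
  have hscale := mul_le_mul_of_nonneg_left hy (epochRate_pos hδ hδ1 k).le
  rcases le_total 0 y with hy0 | hy0
  · rw [abs_of_nonneg hy0] at hscale
    left; linarith
  · rw [abs_of_nonpos hy0] at hscale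
    right; linarith

end Stitching

lemma hasSum_two_mul_div_three_pow_succ (δ : ℝ) :
    HasSum (fun k : ℕ => 2 * δ / 3 ^ (k + 1)) δ := by
  have hgeom := (hasSum_geometric_of_lt_one (r := 1 / 3) (by norm_num) (by norm_num)).mul_left
    (2 * δ / 3)
  have hterm : (fun k : ℕ => 2 * δ / 3 ^ (k + 1)) = fun k => 2 * δ / 3 * (1 / 3) ^ k := by
    ext k; rw [pow_succ, one_div_pow]; field_simp
  have hsum : 2 * δ / 3 * (1 - 1 / 3)⁻¹ = δ := by norm_num; ring
  rw [hsum] at hgeom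
  rwa [hterm]

theorem measure_exists_stitchedBoundary_le_le {Ω : Type*} {m0 : MeasurableSpace Ω}
    {μ : Measure Ω} [IsProbabilityMeasure μ] {𝒢 : Filtration ℕ m0} {Y : ℕ → Ω → ℝ}
    (hY : IsMartingaleDiffBoundedByOne μ 𝒢 Y) {δ : ℝ} (hδ : 0 < δ) (hδ1 : δ ≤ 1) :
    μ {ω | ∃ n, stitchedBoundary δ (∑ t ∈ range n, μ[fun ω => Y t ω ^ 2 | 𝒢 t] ω)
      ≤ |∑ t ∈ range n, Y t ω|} ≤ ENNReal.ofReal δ := by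
  set E : ℕ → ℝ → Set Ω :=
    fun k lam => {ω | ∃ n, exp (epochLevel δ k) ≤ freedmanProcess μ 𝒢 Y lam n ω}
  have hE (k : ℕ) {lam : ℝ} (hlam : |lam| ≤ 1) :
      μ (E k lam) ≤ ENNReal.ofReal (δ / 3 ^ (k + 1)) := by
    refine (measure_exists_freedmanProcess_ge_le hY hlam (exp_pos (epochLevel δ k))).trans_eq ?_
    rw [exp_epochLevel hδ, inv_div]
  have hcover : {ω | ∃ n, stitchedBoundary δ (∑ t ∈ range n, μ[fun ω => Y t ω ^ 2 | 𝒢 t] ω)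
      ≤ |∑ t ∈ range n, Y t ω|} ≤ᵐ[μ] ⋃ k, E k (epochRate δ k) ∪ E k (-epochRate δ k) := by
    have hσ (t : ℕ) : 0 ≤ᵐ[μ] μ[fun ω => Y t ω ^ 2 | 𝒢 t] :=
      condExp_nonneg (ae_of_all _ fun ω => sq_nonneg _)
    filter_upwards [ae_all_iff.2 hσ] with ω hσω ⟨n, hn⟩
    obtain ⟨k, hk | hk⟩ := exists_epochLevel_le_of_stitchedBoundary_le hδ hδ1
      (sum_nonneg fun t _ => hσω t) hn
    · exact Set.mem_iUnion.2 ⟨k, .inl ⟨n, exp_le_exp.2 hk⟩⟩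
    · exact Set.mem_iUnion.2 ⟨k, .inr ⟨n, exp_le_exp.2 hk⟩⟩
  calc _ ≤ μ (⋃ k, E k (epochRate δ k) ∪ E k (-epochRate δ k)) := measure_mono_ae hcover
    _ ≤ ∑' k, (μ (E k (epochRate δ k)) + μ (E k (-epochRate δ k))) :=
      (measure_iUnion_le _).trans (ENNReal.tsum_le_tsum fun k => measure_union_le _ _)
    _ ≤ ∑' k : ℕ, ENNReal.ofReal (2 * δ / 3 ^ (k + 1)) := by
      refine ENNReal.tsum_le_tsum fun k => ?_
      have hrate := abs_epochRate_le_one hδ hδ1 k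
      refine (add_le_add (hE k hrate) (hE k ((abs_neg _).trans_le hrate))).trans_eq ?_
      rw [← ENNReal.ofReal_add (by positivity) (by positivity)]
      ring_nf
    _ = ENNReal.ofReal δ := by
      have hsum := hasSum_two_mul_div_three_pow_succ δ
      rw [← ENNReal.ofReal_tsum_of_nonneg (fun k => by positivity) hsum.summable, hsum.tsum_eq]

def prefixFiltration {Ω β : Type*} [m0 : MeasurableSpace Ω] [MeasurableSpace β]
    (X : ℕ → Ω → β) (hX : ∀ t, Measurable (X t)) : Filtration ℕ m0 where
  seq t := MeasurableSpace.comap (fun ω (i : Fin t) => X i ω) inferInstance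
  mono' a b hab := by
    have hrestrict : Measurable fun (x : Fin b → β) (i : Fin a) => x (Fin.castLE hab i) :=
      measurable_pi_lambda _ fun i => measurable_pi_apply _
    change MeasurableSpace.comap (fun ω (i : Fin a) => X i ω) _
      ≤ MeasurableSpace.comap (fun ω (i : Fin b) => X i ω) _
    rw [show (fun ω (i : Fin a) => X i ω) = (fun x i => x (Fin.castLE hab i)) ∘
      (fun ω (i : Fin b) => X i ω) from rfl, ← MeasurableSpace.comap_comp]
    exact MeasurableSpace.comap_mono hrestrict.comap_le
  le' t := (measurable_pi_lambda (fun ω (i : Fin t) => X i ω) fun i => hX i).comap_le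

lemma measurable_prefixFiltration_succ {Ω β : Type*} [MeasurableSpace Ω] [MeasurableSpace β]
    {X : ℕ → Ω → β} (hX : ∀ t, Measurable (X t)) (t : ℕ) :
    Measurable[prefixFiltration X hX (t + 1)] (X t) :=
  (measurable_pi_apply (X := fun _ : Fin (t + 1) => β) ⟨t, t.lt_succ_self⟩).comp
    (comap_measurable fun ω (i : Fin (t + 1)) => X i ω)

lemma isMartingaleDiffBoundedByOne_condExp_sub {Ω : Type*} {m0 : MeasurableSpace Ω}
    {μ : Measure Ω} [IsFiniteMeasure μ] {𝒢 : Filtration ℕ m0} {X : ℕ → Ω → ℝ}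
    (hX : ∀ t, StronglyMeasurable[𝒢 (t + 1)] (X t))
    (hX_bdd : ∀ t, ∀ᵐ ω ∂μ, |X t ω| ≤ 1 / 2) :
    IsMartingaleDiffBoundedByOne μ 𝒢 fun t => μ[X t | 𝒢 t] - X t where
  stronglyMeasurable_succ t := (stronglyMeasurable_condExp.mono (𝒢.mono t.le_succ)).sub (hX t)
  abs_le_one t := by
    filter_upwards [hX_bdd t, ae_bdd_abs_condExp_of_ae_bdd_abs (m := 𝒢 t) (hX_bdd t)]
      with ω hXω hEω
    calc |(μ[X t | 𝒢 t] - X t) ω| ≤ |μ[X t | 𝒢 t] ω| + |X t ω| := abs_sub _ _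
      _ ≤ 1 := by linarith
  condExp_eq_zero t := by
    have hint : Integrable (X t) μ :=
      Integrable.of_bound ((hX t).mono (𝒢.le _)).aestronglyMeasurable (1 / 2)
        (by simpa only [Real.norm_eq_abs] using hX_bdd t)
    filter_upwards [condExp_sub (integrable_condExp (m := 𝒢 t) (f := X t)) hint (𝒢 t),
      condExp_condExp_of_le le_rfl (𝒢.le t) (f := X t) (μ := μ)] with ω hsub hE
    simp [hsub, hE]

/-- Time-uniform martingale concentration: for random variables `X_1, X_2, …` bounded by `1/2`,
with `S_n` the absolute centered partial sum and `V_n` the cumulative conditional variance,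
`ℙ(∃ n ≥ 1, S_n ≥ 6√((V_n + 4/3)·log((V_n + 1)/δ)) + 2 log(1/δ) + (4/3) log 3) ≤ δ`.
Here `X i` is the `(i+1)`-st variable, and `G t` is the σ-algebra generated by `X 0, …, X (t-1)`. -/
theorem time_uniform_martingale_concentration
    (Ω : Type*) [m0 : MeasurableSpace Ω] (μ : Measure Ω) [IsProbabilityMeasure μ]
    (X : ℕ → Ω → ℝ) (hXmeas : ∀ t, Measurable (X t))
    (hXbdd : ∀ t, ∀ᵐ ω ∂μ, |X t ω| ≤ 1 / 2)
    (G : ℕ → MeasurableSpace Ω)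
    (hG : ∀ t, G t = MeasurableSpace.comap (fun ω => fun i : Fin t => X i ω) inferInstance)
    (S V : ℕ → Ω → ℝ)
    (hS : ∀ n ω, S n ω = |∑ t ∈ Finset.range n, ((μ[X t | G t]) ω - X t ω)|)
    (hV : ∀ n ω, V n ω = ∑ t ∈ Finset.range n,
      (μ[fun ω' => (X t ω' - (μ[X t | G t]) ω') ^ 2 | G t]) ω)
    (δ : ℝ) (hδ : 0 < δ) :
    (μ {ω | ∃ n : ℕ, 1 ≤ n ∧
        6 * Real.sqrt ((V n ω + 4 / 3) * Real.log ((V n ω + 1) / δ))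
            + 2 * Real.log (1 / δ) + (4 / 3) * Real.log 3 ≤ S n ω}).toReal ≤ δ := by
  rcases lt_or_ge 1 δ with hδ1 | hδ1
  · exact measureReal_le_one.trans hδ1.le
  obtain rfl : G = prefixFiltration X hXmeas := funext hG
  have hY := isMartingaleDiffBoundedByOne_condExp_sub (μ := μ)
    (fun t => (measurable_prefixFiltration_succ hXmeas t).stronglyMeasurable) hXbdd
  have hVY (n : ℕ) (ω : Ω) : V n ω = ∑ t ∈ range n,
      μ[fun ω => (μ[X t | prefixFiltration X hXmeas t] - X t) ω ^ 2 |
        prefixFiltration X hXmeas t] ω := by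
    simp_rw [hV, Pi.sub_apply, sub_sq_comm]
  refine ENNReal.toReal_le_of_le_ofReal hδ.le <| (measure_mono ?_).trans
    (measure_exists_stitchedBoundary_le_le hY hδ hδ1)
  rintro ω ⟨n, -, hn⟩
  exact ⟨n, by rwa [hVY, hS] at hn⟩
end

section
/- Auxiliary logarithmic inequality: for every real x ≥ 0, (x + 4/3)·log(x + 3) − 2·(x + 1)·log(x + 1) − (4/3)·log 3 ≤ 0; equivalently, (x + 4/3)·log(x + 3) ≤ 2·(x + 1)·log(x + 1) + (4/3)·log 3. -/
open Real

/-! For `x ≤ 2` the tangent bound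
`log (x + 3) ≤ log 3 + x / 3` and the Padé bound `2x / (x + 2) ≤ log (1 + x)` leave a
rational function of `x` and `log 3 < 1.1` that is nonpositive on `[0, 2]`. For `x ≥ 2`,
subadditivity `log (x + 3) ≤ log 3 + log (x + 1)` reduces the claim to
`x log 3 ≤ (x + 2/3) log (x + 1)`, which holds since `x + 1 ≥ 3`. -/

namespace Real

lemma log_add_le_log_add_div {a x : ℝ} (ha : 0 < a) (hax : 0 < a + x) :
    log (a + x) ≤ log a + x / a := by
  have h := log_le_sub_one_of_pos (div_pos hax ha)
  rw [log_div hax.ne' ha.ne', add_div, div_self ha.ne'] at h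
  linarith

lemma log_add_three_le_log_three_add_log_add_one {x : ℝ} (hx : 0 ≤ x) :
    log (x + 3) ≤ log 3 + log (x + 1) := by
  rw [← log_mul (by norm_num) (by positivity)]
  exact log_le_log (by positivity) (by linarith)

end Real

lemma aux_log_inequality_of_le_two {x : ℝ} (hx : 0 ≤ x) (hx2 : x ≤ 2) :
    (x + 4 / 3) * log (x + 3) - 2 * (x + 1) * log (x + 1) - (4 / 3) * log 3 ≤ 0 := by
  have hupper : log (x + 3) ≤ log 3 + x / 3 := by
    simpa only [add_comm x] using log_add_le_log_add_div (a := 3) (by norm_num) (by linarith)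
  have hlower : 2 * x / (x + 2) ≤ log (x + 1) := by
    simpa only [add_comm x] using le_log_one_add_of_nonneg hx
  have hpoly : x * (log 3 + x / 3 + 4 / 9) ≤ 4 * x * (x + 1) / (x + 2) := by
    rw [le_div_iff₀ (by linarith)]
    have hlog3 : log 3 < 1.1 := log_three_lt_d9.trans (by norm_num)
    nlinarith [mul_nonneg (mul_nonneg hx (by linarith : (0 : ℝ) ≤ x + 2)) (sub_nonneg.2 hlog3.le),
      mul_nonneg (mul_nonneg hx hx) (sub_nonneg.2 hx2)]
  have h3 := mul_le_mul_of_nonneg_left hupper (by linarith : (0 : ℝ) ≤ x + 4 / 3)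
  have h1 := mul_le_mul_of_nonneg_left hlower (by linarith : (0 : ℝ) ≤ 2 * (x + 1))
  have hfrac : 2 * (x + 1) * (2 * x / (x + 2)) = 4 * x * (x + 1) / (x + 2) := by ring
  linarith

lemma aux_log_inequality_of_two_le {x : ℝ} (hx : 2 ≤ x) :
    (x + 4 / 3) * log (x + 3) - 2 * (x + 1) * log (x + 1) - (4 / 3) * log 3 ≤ 0 := by
  have hsub := log_add_three_le_log_three_add_log_add_one (by linarith : (0 : ℝ) ≤ x)
  have hmono : log 3 ≤ log (x + 1) := log_le_log (by norm_num) (by linarith)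
  have hlog3 : 0 ≤ log 3 := log_nonneg (by norm_num)
  linarith [mul_le_mul_of_nonneg_left hsub (by linarith : (0 : ℝ) ≤ x + 4 / 3),
    mul_le_mul_of_nonneg_left hmono (by linarith : (0 : ℝ) ≤ x)]

/-- Auxiliary logarithmic inequality: for every `x ≥ 0`,
`(x + 4/3)·log(x + 3) − 2·(x + 1)·log(x + 1) − (4/3)·log 3 ≤ 0`. -/
theorem aux_log_inequality (x : ℝ) (hx : 0 ≤ x) :
    (x + 4 / 3) * Real.log (x + 3) - 2 * (x + 1) * Real.log (x + 1)
      - (4 / 3) * Real.log 3 ≤ 0 := by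
  rcases le_total x 2 with hx2 | hx2
  · exact aux_log_inequality_of_le_two hx hx2
  · exact aux_log_inequality_of_two_le hx2
end
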